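/- arXiv:1703.02728 — 2 statements merged into one kernel-verified Lean document; each statement's English description precedes it below -/
import Mathlib

section
/- If Ŷ ∈ {±1}^W is a minimizer of ∑_{uv∈E(W)} 1{Ŷ_u Ŷ_v ≠ X_{uv}} and S is a connected component of the set of vertices where Ŷ disagrees with ground truth Y (assuming Ŷ ≠ ±Y), then the number of edges (u,v) ∈ δ(S) with X_{uv} ≠ Y_u Y_v is at least ⌈|δ(S)|/2⌉. -/
open Finset

/-- The product label `Y_u Y_v` of an unordered edge. -/
def edgeLabel {V : Type*} (Y : V → ℤˣ) : Sym2 V → ℤˣ :=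
  Sym2.lift ⟨fun u v => Y u * Y v, fun _ _ => mul_comm _ _⟩

/-- Number of edges of `G` violated by the labeling `Yh` given edge observations `X`. -/
def edgeCost {V : Type*} [Fintype V] [DecidableEq V] (G : SimpleGraph V)
    [DecidableRel G.Adj] (Yh : V → ℤˣ) (X : Sym2 V → ℤˣ) : ℕ :=
  (G.edgeFinset.filter (fun e => edgeLabel Yh e ≠ X e)).card

/-- Size of the edge boundary `δ(S)`, counted as ordered pairs `(u,v)` with `u ∈ S`,
`v ∉ S`, `u ~ v`. -/
def bdry {V : Type*} [Fintype V] [DecidableEq V] (G : SimpleGraph V)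
    [DecidableRel G.Adj] (S : Finset V) : ℕ :=
  (Finset.univ.filter (fun pr : V × V => G.Adj pr.1 pr.2 ∧ pr.1 ∈ S ∧ pr.2 ∉ S)).card

/-! Flipping a labelling on a vertex set `S` changes the product label of exactly the edges of
the cut `δ(S)`, so it swaps violated and satisfied cut edges and leaves every other edge alone.
Hence a minimizer violates at most half of `δ(S)`. When `S` is a maximal set on which `Ŷ = -Y`,
the labels `Ŷ_u Ŷ_v` and `Y_u Y_v` are opposite on every cut edge, so the cut edges satisfied by
`Ŷ`, at least half of them, are exactly those whose observation is flipped from the truth. -/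

lemma edgeLabel_mk {V : Type*} (Y : V → ℤˣ) (u v : V) : edgeLabel Y s(u, v) = Y u * Y v := rfl

section Cut

variable {V : Type*} [Fintype V] [DecidableEq V] (G : SimpleGraph V) [DecidableRel G.Adj]
  (S : Finset V)

def cutPairs : Finset (V × V) :=
  univ.filter fun p => G.Adj p.1 p.2 ∧ p.1 ∈ S ∧ p.2 ∉ S

def cutEdges : Finset (Sym2 V) := (cutPairs G S).image fun p => s(p.1, p.2)

variable {G S}

lemma mem_cutPairs {p : V × V} : p ∈ cutPairs G S ↔ G.Adj p.1 p.2 ∧ p.1 ∈ S ∧ p.2 ∉ S := by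
  simp [cutPairs]

lemma injOn_mk_cutPairs :
    Set.InjOn (fun p : V × V => s(p.1, p.2)) (cutPairs G S : Set (V × V)) := by
  rintro ⟨u, v⟩ huv ⟨u', v'⟩ huv' h
  simp only [mem_coe, mem_cutPairs] at huv huv'
  rcases Sym2.eq_iff.1 h with ⟨rfl, rfl⟩ | ⟨rfl, rfl⟩
  · rfl
  · exact absurd huv.2.1 huv'.2.2

variable (G S)

lemma card_filter_cutEdges (P : Sym2 V → Prop) [DecidablePred P] :
    #((cutEdges G S).filter P) = #((cutPairs G S).filter fun p => P s(p.1, p.2)) := by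
  rw [cutEdges, filter_image, card_image_of_injOn (injOn_mk_cutPairs.mono (filter_subset _ _))]

lemma bdry_eq_card_cutEdges : bdry G S = #(cutEdges G S) :=
  (card_image_of_injOn injOn_mk_cutPairs).symm

lemma cutEdges_subset_edgeFinset : cutEdges G S ⊆ G.edgeFinset := by
  simp only [cutEdges, subset_iff, mem_image, mem_cutPairs]
  rintro _ ⟨⟨u, v⟩, ⟨huv, -⟩, rfl⟩
  exact G.mem_edgeFinset.2 huv

lemma edgeCost_eq_add (Z : V → ℤˣ) (X : Sym2 V → ℤˣ) :
    edgeCost G Z X = #((G.edgeFinset \ cutEdges G S).filter fun e => edgeLabel Z e ≠ X e)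
      + #((cutEdges G S).filter fun e => edgeLabel Z e ≠ X e) := by
  rw [edgeCost, ← card_union_of_disjoint (disjoint_filter_filter sdiff_disjoint),
    ← filter_union, sdiff_union_of_subset (cutEdges_subset_edgeFinset G S)]

variable {G S}

lemma exists_eq_mk_of_mem_cutEdges {e : Sym2 V} (he : e ∈ cutEdges G S) :
    ∃ u v, e = s(u, v) ∧ G.Adj u v ∧ u ∈ S ∧ v ∉ S := by
  obtain ⟨⟨u, v⟩, huv, rfl⟩ := mem_image.1 he
  exact ⟨u, v, rfl, mem_cutPairs.1 huv⟩

lemma exists_eq_mk_of_mem_sdiff_cutEdges {e : Sym2 V} (he : e ∈ G.edgeFinset \ cutEdges G S) :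
    ∃ u v, e = s(u, v) ∧ (u ∈ S ↔ v ∈ S) := by
  induction e using Sym2.ind with
  | _ u v =>
  refine ⟨u, v, rfl, ?_⟩
  by_contra hside
  obtain ⟨huv, hcut⟩ := mem_sdiff.1 he
  have huv : G.Adj u v := G.mem_edgeFinset.1 huv
  apply hcut
  by_cases hu : u ∈ S
  · exact mem_image_of_mem _ (mem_cutPairs.2 ⟨huv, hu, fun hv => hside (iff_of_true hu hv)⟩)
  · rw [Sym2.eq_swap]
    exact mem_image_of_mem _ (mem_cutPairs.2 ⟨huv.symm, by tauto, hu⟩)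

end Cut

section Flip

variable {V : Type*} [DecidableEq V]

def flipOn (S : Finset V) (Z : V → ℤˣ) : V → ℤˣ := fun v => if v ∈ S then -Z v else Z v

lemma edgeLabel_flipOn_of_mem_iff {S : Finset V} {u v : V} (h : u ∈ S ↔ v ∈ S) (Z : V → ℤˣ) :
    edgeLabel (flipOn S Z) s(u, v) = edgeLabel Z s(u, v) := by
  by_cases hu : u ∈ S <;> simp [edgeLabel_mk, flipOn, hu, ← h]

lemma edgeLabel_flipOn_of_mem_of_not_mem {S : Finset V} {u v : V} (hu : u ∈ S) (hv : v ∉ S)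
    (Z : V → ℤˣ) : edgeLabel (flipOn S Z) s(u, v) = -edgeLabel Z s(u, v) := by
  simp [edgeLabel_mk, flipOn, hu, hv]

variable [Fintype V] (G : SimpleGraph V) [DecidableRel G.Adj] (S : Finset V)

lemma edgeCost_flipOn (Z : V → ℤˣ) (X : Sym2 V → ℤˣ) :
    edgeCost G (flipOn S Z) X
      = #((G.edgeFinset \ cutEdges G S).filter fun e => edgeLabel Z e ≠ X e)
      + #((cutEdges G S).filter fun e => edgeLabel Z e = X e) := by
  rw [edgeCost_eq_add G S]
  congr 2 <;> refine filter_congr fun e he => ?_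
  · obtain ⟨u, v, rfl, huv⟩ := exists_eq_mk_of_mem_sdiff_cutEdges he
    rw [edgeLabel_flipOn_of_mem_iff huv]
  · obtain ⟨u, v, rfl, -, hu, hv⟩ := exists_eq_mk_of_mem_cutEdges he
    rw [edgeLabel_flipOn_of_mem_of_not_mem hu hv, Ne, neg_eq_iff_eq_neg, ← Int.units_ne_iff_eq_neg,
      not_not]

lemma card_filter_ne_le_card_filter_eq_of_edgeCost_le_flipOn {Z : V → ℤˣ} {X : Sym2 V → ℤˣ}
    (h : edgeCost G Z X ≤ edgeCost G (flipOn S Z) X) :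
    #((cutEdges G S).filter fun e => edgeLabel Z e ≠ X e)
      ≤ #((cutEdges G S).filter fun e => edgeLabel Z e = X e) := by
  rw [edgeCost_eq_add G S, edgeCost_flipOn] at h
  omega

end Flip

section Disagreement

variable {V : Type*} [Fintype V] [DecidableEq V] {G : SimpleGraph V} [DecidableRel G.Adj]
  {S : Finset V} {Y Yh : V → ℤˣ}

lemma edgeLabel_eq_neg_of_mem_cutEdges (hSD : ∀ v ∈ S, Yh v ≠ Y v)
    (hmax : ∀ u ∈ S, ∀ v : V, G.Adj u v → Yh v ≠ Y v → v ∈ S) {e : Sym2 V}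
    (he : e ∈ cutEdges G S) : edgeLabel Yh e = -edgeLabel Y e := by
  obtain ⟨u, v, rfl, huv, hu, hv⟩ := exists_eq_mk_of_mem_cutEdges he
  have hYu : Yh u = -Y u := Int.units_ne_iff_eq_neg.1 (hSD u hu)
  have hYv : Yh v = Y v := not_not.1 fun h => hv (hmax u hu v huv h)
  rw [edgeLabel_mk, edgeLabel_mk, hYu, hYv, neg_mul]

end Disagreement

theorem stmt6_general {V : Type*} [Fintype V] [DecidableEq V] (G : SimpleGraph V)
    [DecidableRel G.Adj] (X : Sym2 V → ℤˣ) (Y Yh : V → ℤˣ)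
    (hmin : ∀ Y' : V → ℤˣ, edgeCost G Yh X ≤ edgeCost G Y' X)
    (S : Finset V)
    (hSD : ∀ v ∈ S, Yh v ≠ Y v)
    (hmax : ∀ u ∈ S, ∀ v : V, G.Adj u v → Yh v ≠ Y v → v ∈ S) :
    (bdry G S + 1) / 2
      ≤ (Finset.univ.filter (fun pr : V × V =>
          G.Adj pr.1 pr.2 ∧ pr.1 ∈ S ∧ pr.2 ∉ S ∧
            X s(pr.1, pr.2) ≠ Y pr.1 * Y pr.2)).card := by
  have hflip := card_filter_ne_le_card_filter_eq_of_edgeCost_le_flipOn G S (hmin (flipOn S Yh))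
  have hflipped : ∀ e ∈ cutEdges G S, edgeLabel Yh e = X e ↔ X e ≠ edgeLabel Y e := fun e he => by
    rw [edgeLabel_eq_neg_of_mem_cutEdges hSD hmax he, neg_eq_iff_eq_neg, ← Int.units_ne_iff_eq_neg,
      ne_comm]
  rw [filter_congr hflipped, filter_congr fun e he => not_congr (hflipped e he)] at hflip
  have htarget : #(univ.filter fun pr : V × V => G.Adj pr.1 pr.2 ∧ pr.1 ∈ S ∧ pr.2 ∉ S ∧
        X s(pr.1, pr.2) ≠ Y pr.1 * Y pr.2)
      = #((cutEdges G S).filter fun e => X e ≠ edgeLabel Y e) := by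
    rw [card_filter_cutEdges, cutPairs, filter_filter]
    simp only [and_assoc, edgeLabel_mk]
  have hsplit := card_filter_add_card_filter_not (s := cutEdges G S) (fun e => X e ≠ edgeLabel Y e)
  rw [bdry_eq_card_cutEdges, htarget]
  omega

/-- If `Ŷ` minimizes the number of violated edge observations, `Ŷ ≠ ±Y`, and `S` is a
(maximal) connected component of the disagreement set of `Ŷ` with the ground truth `Y`,
then the number of edges of `δ(S)` whose observation is flipped from the ground truth is
at least `⌈|δ(S)|/2⌉`. -/
theorem stmt6 {V : Type*} [Fintype V] [DecidableEq V] (G : SimpleGraph V)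
    [DecidableRel G.Adj] (X : Sym2 V → ℤˣ) (Y Yh : V → ℤˣ)
    (hmin : ∀ Y' : V → ℤˣ, edgeCost G Yh X ≤ edgeCost G Y' X)
    (hne : Yh ≠ Y) (hne' : Yh ≠ fun v => - Y v)
    (S : Finset V) (hSne : S.Nonempty)
    (hSD : ∀ v ∈ S, Yh v ≠ Y v)
    (hconn : (G.induce (S : Set V)).Connected)
    (hmax : ∀ u ∈ S, ∀ v : V, G.Adj u v → Yh v ≠ Y v → v ∈ S) :
    (bdry G S + 1) / 2
      ≤ (Finset.univ.filter (fun pr : V × V =>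
          G.Adj pr.1 pr.2 ∧ pr.1 ∈ S ∧ pr.2 ∉ S ∧
            X s(pr.1, pr.2) ≠ Y pr.1 * Y pr.2)).card :=
  stmt6_general G X Y Yh hmin S hSD hmax
end

section
/- ERM excess risk bound: Let V be a finite set, Y ∈ {±1}^V, q < 1/2, and Z_v independent with Pr(Z_v = Y_v) = 1 - q. Let F ⊆ {±1}^V be a finite class, Y* = argmin_{Y'∈F} ∑_v Pr(Y'_v ≠ Z_v), and Ŷ = argmin_{Y'∈F} ∑_v 1{Y'_v ≠ Z_v} be the empirical risk minimizer. Then with probability at least 1 − δ, for every c > 0: ∑_v Pr(Ŷ_v ≠ Z_v) − ∑_v Pr(Y*_v ≠ Z_v) ≤ (2/3 + c/2)·log(|F|/δ) + (1/c)·∑_v 1{Ŷ_v ≠ Y*_v}. -/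
/-!
Fix a competitor `W ∈ F`. The gap between its true and its empirical excess risk over `Y*` is a
sum of independent centred terms, one per vertex, which vanish where `W` agrees with `Y*` and have
range at most `2` elsewhere. Hoeffding's lemma and a Chernoff bound therefore make the gap exceed
`√(2 L #{W ≠ Y*})` with probability at most `exp (-L)`, and for `L = log (|F| / δ)` a union bound
rules this out for all `W ∈ F` at once with probability `1 - δ`. On that event the ERM, whose
empirical excess risk is `≤ 0`, has excess risk at most `√(2 L #{Ŷ ≠ Y*}) ≤ c L / 2 + #{Ŷ ≠ Y*} / c`
by AM-GM (Hoeffding in place of Bernstein leaves the `2/3 · L` term as slack).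
-/

open Finset

/-- Probability weight of a vertex-noise configuration `g`: each coordinate is flipped
independently with probability `q`. -/
def vwt {V : Type*} [Fintype V] (q : ℝ) (g : V → Bool) : ℝ :=
  ∏ u : V, (if g u then q else 1 - q)

/-- Noisy vertex observations determined by ground truth `Y` and noise `g`. -/
def Zof {V : Type*} (Y : V → ℤˣ) (g : V → Bool) : V → ℤˣ :=
  fun v => (if g v then -1 else 1) * Y v

/-- The (true) risk `∑_v Pr(Y'_v ≠ Z_v)` of a labeling `Y'` under vertex noise rate `q`. -/
def risk {V : Type*} [Fintype V] [DecidableEq V] (q : ℝ) (Y Y' : V → ℤˣ) : ℝ :=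
  ∑ v : V, ∑ g : V → Bool, vwt q g * (if Y' v ≠ Zof Y g v then 1 else 0)

open Real ProbabilityTheory MeasureTheory

theorem two_point_mgf_le {p : ℝ} (hp0 : 0 ≤ p) (hp1 : p ≤ 1) (a b l : ℝ) :
    p * exp (l * (a - (p * a + (1 - p) * b))) + (1 - p) * exp (l * (b - (p * a + (1 - p) * b)))
      ≤ exp ((a - b) ^ 2 * l ^ 2 / 8) := by
  set P : unitInterval := ⟨p, hp0, hp1⟩
  have hIcc : ∀ᵐ z ∂Ber(a, b, P), z ∈ Set.Icc (min a b) (max a b) := by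
    rw [ae_iff, ← Set.compl_def,
      bernoulliMeasure_apply_of_notMem_of_notMem _ measurableSet_Icc.compl] <;> simp
  have hoeffding := (hasSubgaussianMGF_of_mem_Icc aemeasurable_id hIcc).mgf_le l
  simp only [mgf, integral_bernoulliMeasure, id, smul_eq_mul, P] at hoeffding
  convert hoeffding using 2
  push_cast
  simp only [Real.norm_eq_abs, max_sub_min_eq_abs', div_pow, sq_abs]
  ring

section NoiseWeights

variable {V : Type*} [Fintype V] {q : ℝ}

lemma vwt_nonneg (hq0 : 0 ≤ q) (hq1 : q ≤ 1) (g : V → Bool) : 0 ≤ vwt q g :=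
  prod_nonneg fun u _ => by split <;> linarith

variable [DecidableEq V]

lemma sum_vwt_mul_prod (q : ℝ) (h : V → Bool → ℝ) :
    ∑ g : V → Bool, vwt q g * ∏ v, h v (g v) = ∏ v, (q * h v true + (1 - q) * h v false) := by
  simp only [vwt, ← prod_mul_distrib]
  rw [← Fintype.prod_sum fun v (b : Bool) => (if b then q else 1 - q) * h v b]
  simp only [Fintype.sum_bool, if_true, Bool.false_eq_true, if_false]

lemma sum_vwt (q : ℝ) : ∑ g : V → Bool, vwt q g = 1 := by
  simpa using sum_vwt_mul_prod (V := V) q fun _ _ => 1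

lemma sum_vwt_mul_apply (q : ℝ) (v : V) (h : Bool → ℝ) :
    ∑ g : V → Bool, vwt q g * h (g v) = q * h true + (1 - q) * h false := by
  have hsingle : ∀ b : V → Bool, ∏ u, (if u = v then h (b u) else 1) = h (b v) := fun b => by
    rw [prod_eq_single v (fun u _ hu => if_neg hu) (by simp), if_pos rfl]
  have := sum_vwt_mul_prod q fun u b => if u = v then h b else 1
  simp only [hsingle] at this
  rw [this, prod_eq_single v (fun u _ hu => by simp [hu]) (by simp)]
  simp

open Classical in
noncomputable def noiseProb (q : ℝ) (E : (V → Bool) → Prop) : ℝ :=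
  ∑ g : V → Bool, vwt q g * if E g then 1 else 0

lemma noiseProb_mono (hq0 : 0 ≤ q) (hq1 : q ≤ 1) {E E' : (V → Bool) → Prop}
    (h : ∀ g, E g → E' g) : noiseProb q E ≤ noiseProb q E' := by
  refine sum_le_sum fun g _ => mul_le_mul_of_nonneg_left ?_ (vwt_nonneg hq0 hq1 g)
  by_cases hg : E g
  · simp [hg, h g hg]
  · rw [if_neg hg]
    split_ifs <;> norm_num

lemma noiseProb_not (q : ℝ) (E : (V → Bool) → Prop) :
    noiseProb q (fun g => ¬ E g) = 1 - noiseProb q E := by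
  rw [eq_sub_iff_add_eq, noiseProb, noiseProb, ← sum_add_distrib]
  calc _ = ∑ g : V → Bool, vwt q g := sum_congr rfl fun g _ => by by_cases hg : E g <;> simp [hg]
    _ = 1 := sum_vwt q

open Classical in
lemma noiseProb_exists_le_sum (hq0 : 0 ≤ q) (hq1 : q ≤ 1) {ι : Type*} (F : Finset ι)
    (E : ι → (V → Bool) → Prop) :
    noiseProb q (fun g => ∃ i ∈ F, E i g) ≤ ∑ i ∈ F, noiseProb q (E i) := by
  have hind_nonneg : ∀ g i, (0 : ℝ) ≤ if E i g then 1 else 0 := fun g i => by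
    split_ifs <;> norm_num
  calc noiseProb q (fun g => ∃ i ∈ F, E i g)
      ≤ ∑ g : V → Bool, vwt q g * ∑ i ∈ F, if E i g then 1 else 0 := by
        refine sum_le_sum fun g _ => mul_le_mul_of_nonneg_left ?_ (vwt_nonneg hq0 hq1 g)
        split_ifs with hg
        · obtain ⟨i, hi, hEi⟩ := hg
          have := single_le_sum (fun j _ => hind_nonneg g j) hi
          rwa [if_pos hEi] at this
        · exact sum_nonneg fun i _ => hind_nonneg g i
    _ = ∑ i ∈ F, noiseProb q (E i) := by
        simp only [mul_sum]
        exact sum_comm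

theorem one_sub_card_mul_le_noiseProb (hq0 : 0 ≤ q) (hq1 : q ≤ 1) {ι : Type*} {F : Finset ι}
    {E : ι → (V → Bool) → Prop} {ε : ℝ} (hE : ∀ i ∈ F, noiseProb q (E i) ≤ ε)
    {G : (V → Bool) → Prop} (sel : (V → Bool) → ι) (hselF : ∀ g, sel g ∈ F)
    (hG : ∀ g, ¬ E (sel g) g → G g) :
    1 - F.card * ε ≤ noiseProb q G := by
  calc 1 - F.card * ε ≤ 1 - ∑ i ∈ F, noiseProb q (E i) := by
        rw [← nsmul_eq_mul, ← sum_const]; exact sub_le_sub_left (sum_le_sum hE) 1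
    _ ≤ 1 - noiseProb q (fun g => ∃ i ∈ F, E i g) :=
        sub_le_sub_left (noiseProb_exists_le_sum hq0 hq1 F E) 1
    _ ≤ 1 - noiseProb q (fun g => ¬ G g) :=
        sub_le_sub_left (noiseProb_mono hq0 hq1 fun g hg =>
          ⟨sel g, hselF g, not_not.mp fun h => hg (hG g h)⟩) 1
    _ = noiseProb q G := by rw [noiseProb_not, sub_sub_cancel]

theorem sum_vwt_mul_exp_le (hq0 : 0 ≤ q) (hq1 : q ≤ 1) (f : V → Bool → ℝ) (l : ℝ) :
    ∑ g : V → Bool, vwt q g * exp (l * ∑ v, (f v (g v) - (q * f v true + (1 - q) * f v false)))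
      ≤ exp (∑ v, (f v true - f v false) ^ 2 * l ^ 2 / 8) := by
  simp only [mul_sum, exp_sum]
  rw [sum_vwt_mul_prod q fun v b => exp (l * (f v b - (q * f v true + (1 - q) * f v false)))]
  exact prod_le_prod (fun v _ => by positivity) fun v _ => two_point_mgf_le hq0 hq1 _ _ l

theorem noiseProb_sum_sub_mean_gt_le (hq0 : 0 ≤ q) (hq1 : q ≤ 1) (f : V → Bool → ℝ)
    {s t : ℝ} (hs : 0 < s) (ht : 0 ≤ t) (hfs : ∑ v, (f v true - f v false) ^ 2 / 4 ≤ s) :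
    noiseProb q (fun g => t < ∑ v, (f v (g v) - (q * f v true + (1 - q) * f v false)))
      ≤ exp (-(t ^ 2 / (2 * s))) := by
  set X : (V → Bool) → ℝ := fun g => ∑ v, (f v (g v) - (q * f v true + (1 - q) * f v false))
  set l := t / s with hl_def
  have hl : 0 ≤ l := div_nonneg ht hs.le
  calc noiseProb q (fun g => t < X g)
      ≤ ∑ g : V → Bool, vwt q g * (exp (-(l * t)) * exp (l * X g)) := by
        refine sum_le_sum fun g _ => mul_le_mul_of_nonneg_left ?_ (vwt_nonneg hq0 hq1 g)
        rw [← exp_add]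
        split_ifs with hg
        · exact one_le_exp (by nlinarith)
        · positivity
    _ = exp (-(l * t)) * ∑ g : V → Bool, vwt q g * exp (l * X g) := by
        rw [mul_sum]; exact sum_congr rfl fun g _ => by ring
    _ ≤ exp (-(l * t)) * exp (∑ v, (f v true - f v false) ^ 2 * l ^ 2 / 8) :=
        mul_le_mul_of_nonneg_left (sum_vwt_mul_exp_le hq0 hq1 f l) (exp_pos _).le
    _ ≤ exp (-(l * t)) * exp (l ^ 2 / 2 * s) := by
        gcongr
        calc ∑ v, (f v true - f v false) ^ 2 * l ^ 2 / 8
            = l ^ 2 / 2 * ∑ v, (f v true - f v false) ^ 2 / 4 := by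
              rw [mul_sum]; exact sum_congr rfl fun v _ => by ring
          _ ≤ l ^ 2 / 2 * s := by gcongr
    _ = exp (-(t ^ 2 / (2 * s))) := by
        rw [← exp_add, hl_def]; congr 1; field_simp; ring

end NoiseWeights

lemma sqrt_two_mul_mul_le {L H c : ℝ} (hL : 0 ≤ L) (hH : 0 ≤ H) (hc : 0 < c) :
    √(2 * L * H) ≤ c / 2 * L + 1 / c * H := by
  have hsq : (c / 2 * L + 1 / c * H) ^ 2 = 2 * L * H + (c / 2 * L - 1 / c * H) ^ 2 := by
    field_simp; ring
  exact sqrt_le_iff.mpr ⟨by positivity, by nlinarith [sq_nonneg (c / 2 * L - 1 / c * H)]⟩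

section Risk

variable {V : Type*}

def mismatch (Y W : V → ℤˣ) (v : V) (b : Bool) : ℝ :=
  if W v ≠ (if b then -1 else 1) * Y v then 1 else 0

lemma mismatch_mem_Icc (Y W : V → ℤˣ) (v : V) (b : Bool) : mismatch Y W v b ∈ Set.Icc 0 1 := by
  unfold mismatch; split_ifs <;> norm_num

variable [Fintype V]

lemma card_ne_Zof_eq_sum_mismatch (Y W : V → ℤˣ) (g : V → Bool) :
    (#{v | W v ≠ Zof Y g v} : ℝ) = ∑ v, mismatch Y W v (g v) := by
  rw [card_filter]; push_cast; rfl

lemma sum_sq_mismatch_sub_le (Y Ystar W : V → ℤˣ) :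
    ∑ v, ((mismatch Y Ystar v true - mismatch Y W v true)
        - (mismatch Y Ystar v false - mismatch Y W v false)) ^ 2 / 4
      ≤ (#{v | W v ≠ Ystar v} : ℝ) := by
  rw [card_filter]; push_cast
  refine sum_le_sum fun v _ => ?_
  split_ifs with hv
  · obtain ⟨h1, h1'⟩ := mismatch_mem_Icc Y Ystar v true
    obtain ⟨h2, h2'⟩ := mismatch_mem_Icc Y W v true
    obtain ⟨h3, h3'⟩ := mismatch_mem_Icc Y Ystar v false
    obtain ⟨h4, h4'⟩ := mismatch_mem_Icc Y W v false
    set d := (mismatch Y Ystar v true - mismatch Y W v true)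
      - (mismatch Y Ystar v false - mismatch Y W v false)
    have hd : -2 ≤ d ∧ d ≤ 2 := ⟨by linarith, by linarith⟩
    nlinarith
  · simp [mismatch, not_not.mp hv]

variable [DecidableEq V]

lemma risk_eq_sum_mismatch (q : ℝ) (Y W : V → ℤˣ) :
    risk q Y W = ∑ v, (q * mismatch Y W v true + (1 - q) * mismatch Y W v false) :=
  sum_congr rfl fun v _ => sum_vwt_mul_apply q v (mismatch Y W v)

lemma excessRisk_sub_empirical_eq_sum (q : ℝ) (Y Ystar W : V → ℤˣ) (g : V → Bool) :
    risk q Y W - risk q Y Ystar - ((#{v | W v ≠ Zof Y g v} : ℝ) - #{v | Ystar v ≠ Zof Y g v})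
      = ∑ v, ((mismatch Y Ystar v (g v) - mismatch Y W v (g v))
          - (q * (mismatch Y Ystar v true - mismatch Y W v true)
            + (1 - q) * (mismatch Y Ystar v false - mismatch Y W v false))) := by
  simp only [risk_eq_sum_mismatch, card_ne_Zof_eq_sum_mismatch, ← sum_sub_distrib]
  exact sum_congr rfl fun v _ => by ring

def LargeDeviation (q L : ℝ) (Y Ystar W : V → ℤˣ) (g : V → Bool) : Prop :=
  √(2 * L * #{v | W v ≠ Ystar v}) <
    risk q Y W - risk q Y Ystar - ((#{v | W v ≠ Zof Y g v} : ℝ) - #{v | Ystar v ≠ Zof Y g v})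

theorem noiseProb_largeDeviation_le {q L : ℝ} (hq0 : 0 ≤ q) (hq1 : q ≤ 1) (hL : 0 ≤ L)
    (Y Ystar W : V → ℤˣ) : noiseProb q (LargeDeviation q L Y Ystar W) ≤ exp (-L) := by
  by_cases hW : W = Ystar
  · subst hW
    calc noiseProb q (LargeDeviation q L Y W W) ≤ noiseProb q fun _ => False :=
          noiseProb_mono hq0 hq1 fun g hg => by simp [LargeDeviation] at hg
      _ ≤ exp (-L) := by simp [noiseProb, (exp_pos _).le]
  set H : ℝ := ((#{v | W v ≠ Ystar v} : ℕ) : ℝ)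
  have hH : 0 < H := by
    obtain ⟨v, hv⟩ := Function.ne_iff.mp hW
    exact Nat.cast_pos.mpr (card_pos.mpr ⟨v, by simpa using hv⟩)
  calc noiseProb q (LargeDeviation q L Y Ystar W)
      ≤ exp (-(√(2 * L * H) ^ 2 / (2 * H))) := by
        unfold LargeDeviation
        simp only [excessRisk_sub_empirical_eq_sum]
        exact noiseProb_sum_sub_mean_gt_le hq0 hq1
          (fun v b => mismatch Y Ystar v b - mismatch Y W v b) hH (sqrt_nonneg _)
          (sum_sq_mismatch_sub_le Y Ystar W)
    _ = exp (-L) := by rw [sq_sqrt (by positivity)]; field_simp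

lemma excessRisk_le_of_not_largeDeviation {q L : ℝ} (hL : 0 ≤ L) {Y Ystar W : V → ℤˣ}
    {g : V → Bool} (hERM : #{v | W v ≠ Zof Y g v} ≤ #{v | Ystar v ≠ Zof Y g v})
    (hdev : ¬ LargeDeviation q L Y Ystar W g) {c : ℝ} (hc : 0 < c) :
    risk q Y W - risk q Y Ystar ≤ (2 / 3 + c / 2) * L + 1 / c * #{v | W v ≠ Ystar v} := by
  have hERM' : (#{v | W v ≠ Zof Y g v} : ℝ) ≤ #{v | Ystar v ≠ Zof Y g v} := by
    exact_mod_cast hERM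
  have := sqrt_two_mul_mul_le hL (Nat.cast_nonneg #{v | W v ≠ Ystar v}) hc
  rw [LargeDeviation, not_lt] at hdev
  linarith

end Risk

open Classical in
theorem stmt9_general {V : Type*} [Fintype V] [DecidableEq V]
    (q δ : ℝ) (hq0 : 0 ≤ q) (hq : q < 1/2) (hδ : 0 < δ) (hδ1 : δ ≤ 1)
    (Y : V → ℤˣ) (F : Finset (V → ℤˣ))
    (Ystar : V → ℤˣ) (hYstarF : Ystar ∈ F)
    (sel : (V → ℤˣ) → (V → ℤˣ))
    (hselF : ∀ Z : V → ℤˣ, sel Z ∈ F)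
    (hselERM : ∀ Z : V → ℤˣ, ∀ Y' ∈ F,
      (Finset.univ.filter (fun v => sel Z v ≠ Z v)).card
        ≤ (Finset.univ.filter (fun v => Y' v ≠ Z v)).card) :
    1 - δ ≤ ∑ g : V → Bool, vwt q g *
        (if ∀ c : ℝ, 0 < c →
            risk q Y (sel (Zof Y g)) - risk q Y Ystar
              ≤ (2/3 + c/2) * Real.log (F.card / δ)
                + (1/c) * ((Finset.univ.filter
                    (fun v => sel (Zof Y g) v ≠ Ystar v)).card : ℝ)
          then 1 else 0) := by
  have hq1 : q ≤ 1 := by linarith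
  have hcard : (1 : ℝ) ≤ F.card := by exact_mod_cast card_pos.mpr ⟨Ystar, hYstarF⟩
  have hL : 0 ≤ Real.log (F.card / δ) := log_nonneg (by rw [le_div_iff₀ hδ]; linarith)
  have hδ_eq : F.card * exp (-Real.log (F.card / δ)) = δ := by
    rw [exp_neg, exp_log (by positivity)]; field_simp
  calc 1 - δ = 1 - F.card * exp (-Real.log (F.card / δ)) := by rw [hδ_eq]
    _ ≤ _ := one_sub_card_mul_le_noiseProb hq0 hq1
      (fun W _ => noiseProb_largeDeviation_le hq0 hq1 hL Y Ystar W) (fun g => sel (Zof Y g))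
      (fun g => hselF _)
      (fun g hdev c hc => excessRisk_le_of_not_largeDeviation hL (hselERM _ _ hYstarF) hdev hc)

open Classical in
theorem stmt9 {V : Type*} [Fintype V] [DecidableEq V]
    (q δ : ℝ) (hq0 : 0 ≤ q) (hq : q < 1/2) (hδ : 0 < δ) (hδ1 : δ ≤ 1)
    (Y : V → ℤˣ) (F : Finset (V → ℤˣ)) (hF : F.Nonempty)
    (Ystar : V → ℤˣ) (hYstarF : Ystar ∈ F)
    (hYstarMin : ∀ Y' ∈ F, risk q Y Ystar ≤ risk q Y Y')
    (sel : (V → ℤˣ) → (V → ℤˣ))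
    (hselF : ∀ Z : V → ℤˣ, sel Z ∈ F)
    (hselERM : ∀ Z : V → ℤˣ, ∀ Y' ∈ F,
      (Finset.univ.filter (fun v => sel Z v ≠ Z v)).card
        ≤ (Finset.univ.filter (fun v => Y' v ≠ Z v)).card) :
    1 - δ ≤ ∑ g : V → Bool, vwt q g *
        (if ∀ c : ℝ, 0 < c →
            risk q Y (sel (Zof Y g)) - risk q Y Ystar
              ≤ (2/3 + c/2) * Real.log (F.card / δ)
                + (1/c) * ((Finset.univ.filter
                    (fun v => sel (Zof Y g) v ≠ Ystar v)).card : ℝ)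
          then 1 else 0) :=
  stmt9_general q δ hq0 hq hδ hδ1 Y F Ystar hYstarF sel hselF hselERM
end
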